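/- Let g be a finite-dimensional semisimple real Lie algebra with pairing ⟨·,·⟩ = −B and dual bases {e_k}, {e^k}. Let T' : g × g → g be a skew-symmetric 2-cocycle for the adjoint representation, and set A(X) = Σ_k [e_k, T'(X, e^k)]. Then the modified derivative vanishes identically: for all X, Y in g, T'(X,Y) − [A(X), Y] − [X, A(Y)] + A([X,Y]) = 0. -/

import Mathlib

/-!
Bracket the cocycle identity for `(X, Y, f k)` with `e k` on the left and sum over `k`.
Since the bases are dual for `-B`, `∑ k, ad (e k) ∘ ad (f k)` is `-1`: the Casimir element of the
Killing form acts as the identity on the adjoint representation. Hence the term `⁅T' X Y, f k⁆`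
contributes `T' X Y` and `T' ⁅X, Y⁆ (f k)` contributes `A ⁅X, Y⁆`. The Jacobi identity turns the
two remaining bracket terms into `-⁅A X, Y⁆ - ⁅X, A Y⁆` plus two error sums, and these cancel
against the last two terms of the cocycle identity because the Casimir tensor `∑ k, e k ⊗ f k` is
`ad`-invariant.
-/

open Finset

section DualBases

variable {R M ι : Type*} [CommSemiring R] [AddCommMonoid M] [Module R M]
  [Fintype ι] [DecidableEq ι]
  {Φ : LinearMap.BilinForm R M} {e f : Module.Basis ι R M}

theorem Module.Basis.repr_apply_eq_of_dual
    (hdual : ∀ i j, Φ (e i) (f j) = if i = j then 1 else 0) (x : M) (k : ι) :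
    e.repr x k = Φ x (f k) := by
  conv_rhs => rw [← e.sum_repr x]
  simp [hdual, -Module.Basis.sum_repr]

theorem Module.Basis.repr_apply_eq_of_dual'
    (hdual : ∀ i j, Φ (e i) (f j) = if i = j then 1 else 0) (x : M) (k : ι) :
    f.repr x k = Φ (e k) x :=
  Module.Basis.repr_apply_eq_of_dual (Φ := Φ.flip)
    (fun i j => by simpa [eq_comm] using hdual j i) x k

theorem LinearMap.trace_eq_sum_apply_of_dual
    (hdual : ∀ i j, Φ (e i) (f j) = if i = j then 1 else 0) (φ : M →ₗ[R] M) :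
    LinearMap.trace R M φ = ∑ k, Φ (e k) (φ (f k)) := by
  simp [LinearMap.trace_eq_matrix_trace R f, Matrix.trace, LinearMap.toMatrix_apply,
    Module.Basis.repr_apply_eq_of_dual' hdual]

end DualBases

section Invariant

variable {R L M N ι : Type*} [CommRing R] [LieRing L] [AddCommGroup M] [Module R M]
  [LieRingModule L M] [AddCommGroup N] [Module R N] [Fintype ι] [DecidableEq ι]
  {Φ : LinearMap.BilinForm R M} {e f : Module.Basis ι R M}

theorem LinearMap.BilinForm.lieInvariant.sum_apply_lie_add_apply_lie (hΦ : Φ.lieInvariant L)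
    (hdual : ∀ i j, Φ (e i) (f j) = if i = j then 1 else 0) (F : M →ₗ[R] M →ₗ[R] N) (Y : L) :
    ∑ k, (F ⁅Y, e k⁆ (f k) + F (e k) ⁅Y, f k⁆) = 0 := by
  have he : ∀ k, ⁅Y, e k⁆ = ∑ j, -Φ (e k) ⁅Y, f j⁆ • e j := fun k => by
    conv_lhs => rw [← e.sum_repr ⁅Y, e k⁆]
    simp [Module.Basis.repr_apply_eq_of_dual hdual, hΦ Y]
  have hf : ∀ j, ⁅Y, f j⁆ = ∑ k, Φ (e k) ⁅Y, f j⁆ • f k := fun j => by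
    conv_lhs => rw [← f.sum_repr ⁅Y, f j⁆]
    simp [Module.Basis.repr_apply_eq_of_dual' hdual, -Module.Basis.sum_repr]
  rw [sum_add_distrib, add_eq_zero_iff_eq_neg]
  calc ∑ k, F ⁅Y, e k⁆ (f k) = -∑ j, ∑ k, Φ (e k) ⁅Y, f j⁆ • F (e j) (f k) := by
        simp only [he, map_sum, LinearMap.sum_apply, map_neg, map_smul, LinearMap.neg_apply,
          LinearMap.smul_apply, neg_smul, sum_neg_distrib]
        rw [sum_comm]
    _ = -∑ j, F (e j) ⁅Y, f j⁆ := by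
        congr 1
        refine sum_congr rfl fun j _ => ?_
        conv_rhs => rw [hf j]
        simp [map_sum]

end Invariant

theorem sum_leibniz_lie {L M ι : Type*} [LieRing L] [AddCommGroup M] [LieRingModule L M]
    (s : Finset ι) (a b : ι → L) (m : M) :
    ∑ k ∈ s, ⁅a k, ⁅b k, m⁆⁆ = ⁅∑ k ∈ s, ⁅a k, b k⁆, m⁆ + ∑ k ∈ s, ⁅b k, ⁅a k, m⁆⁆ := by
  rw [sum_lie, ← sum_add_distrib]
  exact sum_congr rfl fun k _ => leibniz_lie _ _ _

section LieAlgebra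

variable {R L ι : Type*} [CommRing R] [LieRing L] [LieAlgebra R L] [Fintype ι] [DecidableEq ι]
  {e f : Module.Basis ι R L}

theorem LinearMap.BilinForm.lieInvariant.sum_lie_apply_lie {Φ : LinearMap.BilinForm R L}
    (hΦ : Φ.lieInvariant L) (hdual : ∀ i j, Φ (e i) (f j) = if i = j then 1 else 0)
    (φ : L →ₗ[R] L) (Y : L) :
    ∑ k, ⁅e k, φ ⁅Y, f k⁆⁆ = -∑ k, ⁅φ (f k), ⁅e k, Y⁆⁆ := by
  have h := hΦ.sum_apply_lie_add_apply_lie hdual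
    ((LieModule.toEnd R L L : L →ₗ[R] Module.End R L).compl₂ φ) Y
  simp only [LinearMap.compl₂_apply, LieHom.coe_toLinearMap, LieModule.toEnd_apply_apply,
    ← lie_skew _ (φ (f _)), ← lie_skew Y (e _), lie_neg, neg_neg, sum_add_distrib] at h
  exact eq_neg_of_add_eq_zero_right h

theorem sum_lie_lie_eq_self_of_killingForm_dual
    (hdual : ∀ i j, -killingForm R L (e i) (f j) = if i = j then 1 else 0) (W : L) :
    ∑ k, ⁅e k, ⁅W, f k⁆⁆ = W := by
  set β := -killingForm R L
  have hβ : ∀ i j, β (e i) (f j) = if i = j then 1 else 0 := hdual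
  refine e.ext_elem fun i => ?_
  rw [Module.Basis.repr_apply_eq_of_dual hβ, Module.Basis.repr_apply_eq_of_dual hβ]
  let D := -(LieAlgebra.ad R L (f i) ∘ₗ LieAlgebra.ad R L W)
  calc β (∑ k, ⁅e k, ⁅W, f k⁆⁆) (f i) = ∑ k, β (e k) (D (f k)) := by
        simp [β, D, LieModule.traceForm_apply_lie_apply, ← lie_skew (f i)]
    _ = LinearMap.trace R L D := (LinearMap.trace_eq_sum_apply_of_dual hβ D).symm
    _ = β W (f i) := by
        rw [map_neg, ← killingForm_apply_apply, LieModule.traceForm_comm]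
        rfl

end LieAlgebra

theorem statement7_general (L : Type*) [LieRing L] [LieAlgebra ℝ L]
    (ι : Type*) [Fintype ι] [DecidableEq ι] (e f : Module.Basis ι ℝ L)
    (hdual : ∀ i j : ι, -(killingForm ℝ L (e i) (f j)) = if i = j then 1 else 0)
    (T' : L →ₗ[ℝ] L →ₗ[ℝ] L)
    (hskew : ∀ X Y : L, T' X Y = - T' Y X)
    (hcocycle : ∀ X Y Z : L,
      ⁅T' X Y, Z⁆ + ⁅T' Y Z, X⁆ + ⁅T' Z X, Y⁆
        + T' ⁅X, Y⁆ Z + T' ⁅Y, Z⁆ X + T' ⁅Z, X⁆ Y = 0)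
    (A : L → L)
    (hA : ∀ X : L, A X = ∑ k, ⁅e k, T' X (f k)⁆) :
    ∀ X Y : L, T' X Y - ⁅A X, Y⁆ - ⁅X, A Y⁆ + A ⁅X, Y⁆ = 0 := by
  intro X Y
  have hinv : (-killingForm ℝ L).lieInvariant L := fun x y z => by
    simp [LieModule.traceForm_lieInvariant ℝ L L x y z]
  have swap := hinv.sum_lie_apply_lie hdual
  set P := ∑ k, ⁅T' Y (f k), ⁅e k, X⁆⁆
  set Q := ∑ k, ⁅T' X (f k), ⁅e k, Y⁆⁆
  have hTXY : ∑ k, ⁅e k, ⁅T' X Y, f k⁆⁆ = T' X Y :=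
    sum_lie_lie_eq_self_of_killingForm_dual hdual _
  have hTYZ : ∑ k, ⁅e k, ⁅T' Y (f k), X⁆⁆ = ⁅A Y, X⁆ + P := by
    rw [sum_leibniz_lie, hA]
  have hTZX : ∑ k, ⁅e k, ⁅T' (f k) X, Y⁆⁆ = -(⁅A X, Y⁆ + Q) := by
    simp only [hskew (f _) X, neg_lie, lie_neg, sum_neg_distrib]
    rw [sum_leibniz_lie, hA]
  have hT_XY : ∑ k, ⁅e k, T' ⁅X, Y⁆ (f k)⁆ = A ⁅X, Y⁆ := (hA _).symm
  have hT_YZ : ∑ k, ⁅e k, T' ⁅Y, f k⁆ X⁆ = Q := by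
    simp only [hskew _ X, lie_neg, sum_neg_distrib, swap, neg_neg, Q]
  have hT_ZX : ∑ k, ⁅e k, T' ⁅f k, X⁆ Y⁆ = -P := by
    simp only [hskew _ Y, ← lie_skew (f _) X, map_neg, LinearMap.neg_apply, neg_neg, swap, P]
  have h0 : ∑ k, ⁅e k, ⁅T' X Y, f k⁆ + ⁅T' Y (f k), X⁆ + ⁅T' (f k) X, Y⁆
      + T' ⁅X, Y⁆ (f k) + T' ⁅Y, f k⁆ X + T' ⁅f k, X⁆ Y⁆ = 0 := by
    simp [hcocycle]
  simp only [lie_add, sum_add_distrib, hTXY, hTYZ, hTZX, hT_XY, hT_YZ, hT_ZX] at h0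
  rw [← h0, ← lie_skew X (A Y)]
  abel

/-- Proposition 2.3, pointwise algebraic form: for a finite-dimensional
semisimple real Lie algebra with dual bases for `⟨·,·⟩ = -B`, a skew-symmetric adjoint
2-cocycle `T'`, and `A X = Σ_k ⁅e k, T' X (f k)⁆`, the modified derivative vanishes:
`T'(X,Y) - ⁅A X, Y⁆ - ⁅X, A Y⁆ + A ⁅X,Y⁆ = 0`. -/
theorem statement7 (L : Type*) [LieRing L] [LieAlgebra ℝ L]
    [FiniteDimensional ℝ L] [LieAlgebra.IsSemisimple ℝ L]
    (ι : Type*) [Fintype ι] [DecidableEq ι] (e f : Module.Basis ι ℝ L)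
    (hdual : ∀ i j : ι, -(killingForm ℝ L (e i) (f j)) = if i = j then 1 else 0)
    (T' : L →ₗ[ℝ] L →ₗ[ℝ] L)
    (hskew : ∀ X Y : L, T' X Y = - T' Y X)
    (hcocycle : ∀ X Y Z : L,
      ⁅T' X Y, Z⁆ + ⁅T' Y Z, X⁆ + ⁅T' Z X, Y⁆
        + T' ⁅X, Y⁆ Z + T' ⁅Y, Z⁆ X + T' ⁅Z, X⁆ Y = 0)
    (A : L → L)
    (hA : ∀ X : L, A X = ∑ k, ⁅e k, T' X (f k)⁆) :
    ∀ X Y : L, T' X Y - ⁅A X, Y⁆ - ⁅X, A Y⁆ + A ⁅X, Y⁆ = 0 :=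
  statement7_general L ι e f hdual T' hskew hcocycle A hA
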